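/- arXiv:cs/0606075 — 2 statements merged into one kernel-verified Lean document; each statement's English description precedes it below -/
import Mathlib

section
/- World-set relations are a strong representation system for any relational query language: for every N : ℕ, every finset C of padded tuple vectors of length N over a tuple type T, and every function Q : Finset T → Finset T' (an arbitrary query mapping each world to a world over a tuple type T'), there exist N' : ℕ and a finset C' of padded tuple vectors of length N' over T' such that C'.image decode = (C.image decode).image Q. -/
/-- A padded tuple vector `v : Fin N → Option T` decodes to the finite set of
tuples `t` with `v i = some t` for some `i` (entries `none`, i.e. `⊥`, are
discarded). -/
def decode {T : Type*} [DecidableEq T] {N : ℕ} (v : Fin N → Option T) : Finset T :=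
  Finset.univ.biUnion fun i => (v i).toFinset

section Encode

variable {T : Type*} [DecidableEq T]

theorem mem_decode {N : ℕ} {v : Fin N → Option T} {t : T} :
    t ∈ decode v ↔ ∃ i, v i = some t := by
  simp [decode]

noncomputable def encode (N : ℕ) (W : Finset T) : Fin N → Option T :=
  fun i => W.toList[(i : ℕ)]?

theorem decode_encode {N : ℕ} {W : Finset T} (h : W.card ≤ N) : decode (encode N W) = W := by
  ext t
  rw [mem_decode, ← Finset.mem_toList, List.mem_iff_getElem?]
  constructor
  · rintro ⟨i, hi⟩
    exact ⟨i, hi⟩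
  · rintro ⟨n, hn⟩
    have hnN : n < N := (List.getElem?_eq_some_iff.mp hn).1.trans_le (by simpa using h)
    exact ⟨⟨n, hnN⟩, hn⟩

theorem exists_image_decode_eq (S : Finset (Finset T)) :
    ∃ (N : ℕ) (C : Finset (Fin N → Option T)), C.image decode = S := by
  refine ⟨S.sup Finset.card, S.image (encode _), ?_⟩
  rw [Finset.image_image]
  exact (Finset.image_congr fun W hW => decode_encode (Finset.le_sup hW)).trans Finset.image_id

end Encode

/-- **World-set relations are a strong representation system for any relational
query language**: for every world-set relation `C` (a finset of padded tuple
vectors of length `N` over `T`) and every query `Q : Finset T → Finset T'`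
mapping worlds over `T` to worlds over `T'`, there are `N'` and a world-set
relation `C'` over `T'` with `C'.image decode = (C.image decode).image Q`. -/
theorem stmt_2 (N : ℕ) {T T' : Type*} [DecidableEq T] [DecidableEq T']
    (C : Finset (Fin N → Option T)) (Q : Finset T → Finset T') :
    ∃ (N' : ℕ) (C' : Finset (Fin N' → Option T')),
      C'.image decode = (C.image decode).image Q :=
  exists_image_decode_eq _
end

section
/- Correctness of the compose operation: let a probabilistic WSD have components S with weights p, and let i ≠ j be two component ids. Form the composed WSD by replacing components i and j with the single component S i × S j whose weight of (a,b) is p i a · p j b, keeping all other components unchanged. Then (1) the weights of the composed component sum to 1 whenever those of components i and j do, and (2) under the canonical bijection between full choices of the original WSD and full choices of the composed WSD, corresponding possible worlds have equal probability. Hence composing two components preserves the represented probabilistic world-set. -/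
/-- The family of components of the WSD obtained by composing components `i`
and `j`: component `j` is removed, component `i` is replaced by the composed
component `S i × S j`, and all other components are kept unchanged. -/
def composedS {m : ℕ} (S : Fin m → Type) (i j : Fin m)
    (x : {x : Fin m // x ≠ j}) : Type :=
  if x.val = i then S i × S j else S x.val

instance composedS.fintype {m : ℕ} (S : Fin m → Type) [∀ x, Fintype (S x)]
    (i j : Fin m) (x : {x : Fin m // x ≠ j}) : Fintype (composedS S i j x) := by
  unfold composedS
  split <;> infer_instance

/-- The weights of the composed WSD: the weight of a local world `(a, b)` of
the composed component is `p i a * p j b`, and the weights of all other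
components are unchanged. -/
def composedP {m : ℕ} (S : Fin m → Type) (p : ∀ x, S x → ℝ) (i j : Fin m)
    (x : {x : Fin m // x ≠ j}) : composedS S i j x → ℝ :=
  if h : x.val = i then
    (fun ab : S i × S j => p i ab.1 * p j ab.2) ∘
      cast (show composedS S i j x = (S i × S j) by simp only [composedS, if_pos h])
  else
    p x.val ∘
      cast (show composedS S i j x = S x.val by simp only [composedS, if_neg h])

/-- The canonical map sending a full choice of the original WSD to the
corresponding full choice of the composed WSD. -/
def composeChoice {m : ℕ} (S : Fin m → Type) (i j : Fin m)
    (w : ∀ x, S x) (x : {x : Fin m // x ≠ j}) : composedS S i j x :=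
  if h : x.val = i then
    cast (show (S i × S j) = composedS S i j x by
      simp only [composedS, if_pos h]) (w i, w j)
  else
    cast (show S x.val = composedS S i j x by
      simp only [composedS, if_neg h]) (w x.val)

section Helpers

variable {m : ℕ} (S : Fin m → Type) (p : ∀ x, S x → ℝ) (i j : Fin m)

lemma composedS_eq_pos (x : {x : Fin m // x ≠ j}) (h : x.val = i) :
    composedS S i j x = (S i × S j) := by simp only [composedS, if_pos h]

lemma composedS_eq_neg (x : {x : Fin m // x ≠ j}) (h : x.val ≠ i) :
    composedS S i j x = S x.val := by simp only [composedS, if_neg h]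

lemma composedP_pos (x : {x : Fin m // x ≠ j}) (h : x.val = i) (t : composedS S i j x) :
    composedP S p i j x t
      = p i (cast (composedS_eq_pos S i j x h) t).1
          * p j (cast (composedS_eq_pos S i j x h) t).2 := by
  simp only [composedP, dif_pos h]; rfl

lemma composedP_neg (x : {x : Fin m // x ≠ j}) (h : x.val ≠ i) (t : composedS S i j x) :
    composedP S p i j x t = p x.val (cast (composedS_eq_neg S i j x h) t) := by
  simp only [composedP, dif_neg h]; rfl

lemma composeChoice_pos (w : ∀ x, S x) (x : {x : Fin m // x ≠ j}) (h : x.val = i) :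
    composeChoice S i j w x = cast (composedS_eq_pos S i j x h).symm (w i, w j) := by
  simp only [composeChoice, dif_pos h]

lemma composeChoice_neg (w : ∀ x, S x) (x : {x : Fin m // x ≠ j}) (h : x.val ≠ i) :
    composeChoice S i j w x = cast (composedS_eq_neg S i j x h).symm (w x.val) := by
  simp only [composeChoice, dif_neg h]

lemma composedP_composeChoice_pos (w : ∀ x, S x) (x : {x : Fin m // x ≠ j}) (h : x.val = i) :
    composedP S p i j x (composeChoice S i j w x) = p i (w i) * p j (w j) := by
  rw [composedP_pos S p i j x h, composeChoice_pos S i j w x h]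
  simp [cast_cast]

lemma composedP_composeChoice_neg (w : ∀ x, S x) (x : {x : Fin m // x ≠ j}) (h : x.val ≠ i) :
    composedP S p i j x (composeChoice S i j w x) = p x.val (w x.val) := by
  rw [composedP_neg S p i j x h, composeChoice_neg S i j w x h]
  simp [cast_cast]

end Helpers

def invChoice {m : ℕ} (S : Fin m → Type) (i j : Fin m) (hij : i ≠ j)
    (v : ∀ x : {x : Fin m // x ≠ j}, composedS S i j x) (x : Fin m) : S x :=
  if hx : x = j then
    cast (congrArg S hx.symm)
      ((cast (composedS_eq_pos S i j ⟨i, hij⟩ rfl) (v ⟨i, hij⟩)).2)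
  else if hxi : x = i then
    cast (congrArg S hxi.symm)
      ((cast (composedS_eq_pos S i j ⟨i, hij⟩ rfl) (v ⟨i, hij⟩)).1)
  else
    cast (composedS_eq_neg S i j ⟨x, hx⟩ hxi) (v ⟨x, hx⟩)

lemma left_inv {m : ℕ} (S : Fin m → Type) (i j : Fin m) (hij : i ≠ j) (w : ∀ x, S x) :
    invChoice S i j hij (composeChoice S i j w) = w := by
  funext x
  by_cases hx : x = j
  · subst hx
    simp only [invChoice, dif_pos rfl]
    rw [composeChoice_pos S i x w ⟨i, hij⟩ rfl]
    simp [cast_cast]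
  · by_cases hxi : x = i
    · subst hxi
      simp only [invChoice, dif_neg hx, dif_pos rfl]
      rw [composeChoice_pos S x j w ⟨x, hx⟩ rfl]
      simp [cast_cast]
    · simp only [invChoice, dif_neg hx, dif_neg hxi]
      rw [composeChoice_neg S i j w ⟨x, hx⟩ hxi]
      simp [cast_cast]

lemma right_inv {m : ℕ} (S : Fin m → Type) (i j : Fin m) (hij : i ≠ j)
    (v : ∀ x : {x : Fin m // x ≠ j}, composedS S i j x) :
    composeChoice S i j (invChoice S i j hij v) = v := by
  funext x
  obtain ⟨x, hx⟩ := x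
  by_cases hxi : x = i
  · subst hxi
    rw [composeChoice_pos S x j _ ⟨x, hx⟩ rfl]
    have h1 : invChoice S x j hij v x
        = (cast (composedS_eq_pos S x j ⟨x, hij⟩ rfl) (v ⟨x, hij⟩)).1 := by
      simp only [invChoice, dif_neg hx, dif_pos rfl]
      simp
    have h2 : invChoice S x j hij v j
        = (cast (composedS_eq_pos S x j ⟨x, hij⟩ rfl) (v ⟨x, hij⟩)).2 := by
      simp only [invChoice, dif_pos rfl]
      simp
    rw [h1, h2]
    show cast _ (cast (composedS_eq_pos S x j ⟨x, hij⟩ rfl) (v ⟨x, hij⟩)) = v ⟨x, hx⟩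
    simp [cast_cast]
  · rw [composeChoice_neg S i j _ ⟨x, hx⟩ hxi]
    simp only [invChoice, dif_neg hx, dif_neg hxi]
    simp [cast_cast]


/-- **Correctness of the compose operation**: composing two distinct
components `i ≠ j` of a probabilistic WSD into the single component
`S i × S j` with weight `p i a * p j b` (keeping all other components
unchanged) (1) yields a composed component whose weights sum to `1` whenever
those of components `i` and `j` do, and (2) the canonical map between full
choices is a bijection under which corresponding possible worlds have equal
probability.  Hence composition preserves the represented probabilistic
world-set. -/
theorem stmt_9 {m : ℕ} (S : Fin m → Type) [∀ x, Fintype (S x)]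
    (p : ∀ x, S x → ℝ) (i j : Fin m) (hij : i ≠ j)
    (hsumi : ∑ a : S i, p i a = 1) (hsumj : ∑ b : S j, p j b = 1) :
    (∑ t : composedS S i j ⟨i, hij⟩, composedP S p i j ⟨i, hij⟩ t = 1) ∧
    Function.Bijective (composeChoice S i j) ∧
    ∀ w : ∀ x, S x,
      ∏ x, p x (w x)
        = ∏ x : {x : Fin m // x ≠ j}, composedP S p i j x (composeChoice S i j w x) := by
  have e := composedS_eq_pos S i j ⟨i, hij⟩ rfl
  refine ⟨?_, ?_, ?_⟩
  · have h1 : ∑ t : composedS S i j ⟨i, hij⟩, composedP S p i j ⟨i, hij⟩ t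
        = ∑ ab : S i × S j, p i ab.1 * p j ab.2 := by
      rw [← Equiv.sum_comp (Equiv.cast e.symm) (composedP S p i j ⟨i, hij⟩)]
      refine Finset.sum_congr rfl fun ab _ => ?_
      rw [composedP_pos S p i j ⟨i, hij⟩ rfl]
      simp [cast_cast]
    rw [h1, Fintype.sum_prod_type]
    simp_rw [← Finset.mul_sum, hsumj, mul_one, hsumi]
  · exact ⟨Function.LeftInverse.injective (left_inv S i j hij),
      Function.RightInverse.surjective (right_inv S i j hij)⟩
  · intro w
    have key : ∀ x : {x : Fin m // x ≠ j},
        composedP S p i j x (composeChoice S i j w x)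
          = if x.val = i then p i (w i) * p j (w j) else p x.val (w x.val) := by
      intro x
      by_cases h : x.val = i
      · rw [if_pos h]; exact composedP_composeChoice_pos S p i j w x h
      · rw [if_neg h]; exact composedP_composeChoice_neg S p i j w x h
    simp_rw [key]
    set g : Fin m → ℝ := fun y => if y = i then p i (w i) * p j (w j) else p y (w y) with hg
    have hR : ∏ x : {x : Fin m // x ≠ j},
        (if x.val = i then p i (w i) * p j (w j) else p x.val (w x.val))
        = ∏ y ∈ Finset.univ.erase j, g y := by
      rw [Finset.prod_subtype (p := fun y => y ≠ j) (Finset.univ.erase j)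
        (fun y => by simp [Finset.mem_erase]) g]
    rw [hR]
    have hierase : i ∈ Finset.univ.erase j := by simp [hij]
    rw [← Finset.mul_prod_erase _ g hierase]
    have hgi : g i = p i (w i) * p j (w j) := by simp [hg]
    have hrest : ∏ y ∈ (Finset.univ.erase j).erase i, g y
        = ∏ y ∈ (Finset.univ.erase j).erase i, p y (w y) := by
      refine Finset.prod_congr rfl fun y hy => ?_
      have : y ≠ i := (Finset.mem_erase.mp hy).1
      simp [hg, this]
    rw [hgi, hrest]
    rw [← Finset.mul_prod_erase Finset.univ (fun y => p y (w y)) (Finset.mem_univ j),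
      ← Finset.mul_prod_erase _ _ hierase]
    ring
end
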